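/- arXiv:0710.2728 — 2 statements merged into one kernel-verified Lean document; each statement's English description precedes it below -/
import Mathlib

section
/- Let $u \leq v$ be positive integers, $d \geq 0$, and $j, \nu \geq 0$ integers with $j \leq u$ and $\nu \leq v + d + u - j$. Define $A_{j,\nu} = \frac{(v-\nu+1)(v-\nu+2)\cdots(v-\nu+u-j)}{(u-j)!\,(d+v-\nu+u-j)!}$ and $A_{0,0} = \frac{(v+1)\cdots(v+u)}{u!\,(d+v+u)!}$. Then there is an absolute constant $C$ such that $|A_{j,\nu}/A_{0,0}| \leq (C \max(d+v+u, 2))^{j+\nu} \cdot 2^{\nu}$; more precisely, $\Big|\frac{(v-\nu+1)\cdots(v-\nu+u-j)}{(v+1)\cdots(v+u-j)}\Big| \leq 2^{\nu}$. -/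
/-!
Each factor satisfies `|b + i - x| ≤ max (b + i) x`, and since `t ≤ 2 ^ t` this is at most
`(b + i) · 2 ^ (x / b)`. With at most `b` factors the product of these excess factors is at most
`2 ^ x`, which is the second claim (`b = v + 1`, `x = ν`). For the first, the remaining
factorials are compared through `n! ≤ n ^ k (n - k)!`, and the factors `(v+1+i)`, `u - j ≤ i < u`,
of `A₀₀` absorb the `u ^ j` this costs.
-/

open Finset Nat

lemma Real.self_le_two_rpow (t : ℝ) : t ≤ 2 ^ t := by
  rcases lt_or_ge t 0 with ht | ht
  · exact ht.le.trans (Real.rpow_pos_of_pos two_pos t).le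
  calc t ≤ ⌊t⌋₊ + 1 := (Nat.lt_floor_add_one t).le
    _ ≤ (2 : ℝ) ^ ⌊t⌋₊ := by exact_mod_cast ⌊t⌋₊.lt_two_pow_self
    _ = 2 ^ (⌊t⌋₊ : ℝ) := (Real.rpow_natCast 2 _).symm
    _ ≤ 2 ^ t := Real.rpow_le_rpow_of_exponent_le one_le_two (Nat.floor_le ht)

lemma abs_sub_le_mul_two_rpow {a b x : ℝ} (hb : 0 < b) (hba : b ≤ a) (hx : 0 ≤ x) :
    |a - x| ≤ a * 2 ^ (x / b) := by
  have hc : 1 ≤ (2 : ℝ) ^ (x / b) := Real.one_le_rpow one_le_two (div_nonneg hx hb.le)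
  have hxb : x ≤ b * 2 ^ (x / b) := by
    calc x = b * (x / b) := (mul_div_cancel₀ x hb.ne').symm
      _ ≤ b * 2 ^ (x / b) := mul_le_mul_of_nonneg_left (Real.self_le_two_rpow _) hb.le
  rw [abs_le]
  constructor <;> nlinarith

lemma abs_prod_sub_le_two_rpow_mul_prod {b x : ℝ} {n : ℕ} (hb : 0 < b) (hx : 0 ≤ x)
    (hn : n ≤ b) : |∏ i ∈ range n, (b - x + i)| ≤ 2 ^ x * ∏ i ∈ range n, (b + i) := by
  calc |∏ i ∈ range n, (b - x + i)| = ∏ i ∈ range n, |(b + i) - x| := by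
        rw [abs_prod]; congr! 2; ring
    _ ≤ ∏ i ∈ range n, ((b + i) * 2 ^ (x / b)) :=
        prod_le_prod (fun _ _ ↦ abs_nonneg _) fun i _ ↦
          abs_sub_le_mul_two_rpow hb (by simp) hx
    _ = (2 ^ (x / b)) ^ n * ∏ i ∈ range n, (b + i) := by
        rw [prod_mul_distrib, prod_const, card_range, mul_comm]
    _ ≤ 2 ^ x * ∏ i ∈ range n, (b + i) := by
        gcongr
        calc ((2 : ℝ) ^ (x / b)) ^ n = 2 ^ (x / b * n) := by
              rw [← Real.rpow_natCast, ← Real.rpow_mul zero_le_two]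
          _ ≤ 2 ^ x := by
              refine Real.rpow_le_rpow_of_exponent_le one_le_two ?_
              calc x / b * n ≤ x / b * b := by gcongr
                _ = x := div_mul_cancel₀ x hb.ne'

lemma abs_prod_shift_le (u v j ν : ℕ) (huv : u ≤ v) :
    |∏ i ∈ range (u - j), ((v : ℝ) - ν + 1 + i)|
      ≤ 2 ^ ν * ∏ i ∈ range (u - j), ((v : ℝ) + 1 + i) := by
  have h := abs_prod_sub_le_two_rpow_mul_prod (b := (v : ℝ) + 1) (x := ν) (n := u - j)
    (by positivity) ν.cast_nonneg (by norm_cast; omega)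
  rw [Real.rpow_natCast] at h
  convert h using 4; ring

lemma Nat.factorial_le_pow_mul_factorial_sub {n k : ℕ} (hk : k ≤ n) :
    n ! ≤ n ^ k * (n - k)! := by
  rw [← factorial_mul_descFactorial hk, mul_comm]
  exact Nat.mul_le_mul_right _ (descFactorial_le_pow n k)

lemma factorial_le_prod_Ico_mul_factorial_sub {u v j : ℕ} (huv : u ≤ v) (hj : j ≤ u) :
    (u ! : ℝ) ≤ (∏ i ∈ Ico (u - j) u, ((v : ℝ) + 1 + i)) * (u - j)! := by
  have hcard : (Ico (u - j) u).card = j := by rw [Nat.card_Ico]; omega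
  calc (u ! : ℝ) ≤ (u : ℝ) ^ j * (u - j)! := by
        exact_mod_cast factorial_le_pow_mul_factorial_sub hj
    _ ≤ (∏ i ∈ Ico (u - j) u, ((v : ℝ) + 1 + i)) * (u - j)! := by
        gcongr
        calc (u : ℝ) ^ j = ∏ _i ∈ Ico (u - j) u, (u : ℝ) := by rw [prod_const, hcard]
          _ ≤ _ := prod_le_prod (fun _ _ ↦ u.cast_nonneg) fun i _ ↦ by
            have : (u : ℝ) ≤ v := by exact_mod_cast huv
            linarith [i.cast_nonneg (α := ℝ)]

/-- The coefficient `A_{j,ν}`; the factorial is `(d + v + u - ν - j)!` when `ν + j ≤ d + v + u`. -/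
noncomputable def coeff (u v d j ν : ℕ) : ℝ :=
  (∏ i ∈ range (u - j), ((v : ℝ) - ν + 1 + i)) /
    ((Nat.factorial (u - j) : ℝ) * (Nat.factorial (((d : ℤ) + v + u - ν - j).toNat) : ℝ))

lemma coeff_of_add_le {u v d j ν : ℕ} (h : ν + j ≤ d + v + u) :
    coeff u v d j ν = (∏ i ∈ range (u - j), ((v : ℝ) - ν + 1 + i)) /
      ((u - j)! * (d + v + u - (ν + j))!) := by
  rw [coeff, show ((d : ℤ) + v + u - ν - j).toNat = d + v + u - (ν + j) by omega]

lemma coeff_zero_zero (u v d : ℕ) :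
    coeff u v d 0 0 = (∏ i ∈ range u, ((v : ℝ) + 1 + i)) / (u ! * (d + v + u)!) := by
  simp [coeff_of_add_le (by omega : 0 + 0 ≤ d + v + u)]

lemma abs_coeff_le {u v d j ν : ℕ} (huv : u ≤ v) (hj : j ≤ u) (h : ν + j ≤ d + v + u) :
    |coeff u v d j ν| ≤ max ((d : ℝ) + v + u) 2 ^ (j + ν) * 2 ^ ν * |coeff u v d 0 0| := by
  set M := max ((d : ℝ) + v + u) 2
  set K := d + v + u
  set N := K - (ν + j)
  set Q := ∏ i ∈ range (u - j), ((v : ℝ) + 1 + i)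
  set R := ∏ i ∈ Ico (u - j) u, ((v : ℝ) + 1 + i)
  have hK : (K ! : ℝ) ≤ M ^ (j + ν) * N ! := by
    calc (K ! : ℝ) ≤ (K : ℝ) ^ (ν + j) * N ! := by
          exact_mod_cast factorial_le_pow_mul_factorial_sub h
      _ ≤ M ^ (j + ν) * N ! := by
          rw [add_comm ν j]
          gcongr
          exact le_of_eq_of_le (by push_cast [K]; rfl) (le_max_left _ _)
  have hfac : (u ! * K ! : ℝ) ≤ M ^ (j + ν) * R * ((u - j)! * N !) := by
    calc (u ! * K ! : ℝ) ≤ (R * (u - j)!) * (M ^ (j + ν) * N !) :=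
          mul_le_mul (factorial_le_prod_Ico_mul_factorial_sub huv hj) hK (by positivity)
            (by positivity)
      _ = M ^ (j + ν) * R * ((u - j)! * N !) := by ring
  have hP : |∏ i ∈ range (u - j), ((v : ℝ) - ν + 1 + i)| ≤ 2 ^ ν * Q :=
    abs_prod_shift_le u v j ν huv
  rw [coeff_of_add_le h, coeff_zero_zero, ← prod_range_mul_prod_Ico _ (sub_le u j), abs_div,
    abs_of_pos (by positivity : (0 : ℝ) < (u - j)! * N !),
    abs_of_nonneg (by positivity : (0 : ℝ) ≤ _ / (u ! * K !)), div_le_iff₀ (by positivity), mul_div_assoc', div_mul_eq_mul_div, le_div_iff₀ (by positivity)]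
  calc |∏ i ∈ range (u - j), ((v : ℝ) - ν + 1 + i)| * (u ! * K !)
      ≤ (2 ^ ν * Q) * (M ^ (j + ν) * R * ((u - j)! * N !)) :=
        mul_le_mul hP hfac (by positivity) (by positivity)
    _ = M ^ (j + ν) * 2 ^ ν * (Q * R) * ((u - j)! * N !) := by ring

/-- Ratio bound for the coefficients `A_{j,ν}` (Lemma 4 of the paper): with
`A_{j,ν} = (v-ν+1)⋯(v-ν+u-j) / ((u-j)! (d+v-ν+u-j)!)`, there is an absolute
constant `C` with `|A_{j,ν}/A_{0,0}| ≤ (C max(d+v+u,2))^{j+ν} · 2^ν`; more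
precisely `|(v-ν+1)⋯(v-ν+u-j)| / ((v+1)⋯(v+u-j)) ≤ 2^ν`. -/
theorem stmt9 :
    ∃ C : ℝ, 0 < C ∧ ∀ u v d j ν : ℕ, 0 < u → u ≤ v → j ≤ u →
      (ν : ℤ) ≤ (v : ℤ) + d + u - j →
      (let A : ℕ → ℕ → ℝ := fun j' ν' =>
          (∏ i ∈ Finset.range (u - j'), ((v : ℝ) - ν' + 1 + i)) /
            ((Nat.factorial (u - j') : ℝ) *
              (Nat.factorial (((d : ℤ) + v + u - ν' - j').toNat) : ℝ));
        |A j ν| ≤ (C * max ((d : ℝ) + v + u) 2) ^ (j + ν) * 2 ^ ν * |A 0 0|) ∧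
      |∏ i ∈ Finset.range (u - j), ((v : ℝ) - ν + 1 + i)|
        ≤ 2 ^ ν * ∏ i ∈ Finset.range (u - j), ((v : ℝ) + 1 + i) := by
  refine ⟨1, one_pos, fun u v d j ν _ huv hj hν ↦ ⟨?_, abs_prod_shift_le u v j ν huv⟩⟩
  rw [one_mul]
  exact abs_coeff_le huv hj (by omega)
end

section
/- Let $h, k$ be positive integers, $\mathcal{A}$ a set of $h$ integers, $z \geq 2$, $Z = \prod_{p \leq z} p$, and $Q = \{n : \gcd(n, Z) = 1\}$. For $1 \leq i \leq Z$ let $f_i = \#\{a \in \mathcal{A} : i + a \in Q\}$ and $b_i(k) = f_i(f_i - 1)\cdots(f_i - k + 1)$. Then $\sum_{i=1}^{Z} b_i(k)$ equals $\sum_{\mathcal{H}} \#\{1 \leq i \leq Z : P_{\mathcal{H}}(i) \in Q\}$, where $\mathcal{H}$ runs over all ordered $k$-tuples of distinct elements of $\mathcal{A}$, and consequently $\frac{1}{Z}\sum_{i=1}^{Z} b_i(k+1) + k\cdot\frac{1}{Z}\sum_{i=1}^{Z} b_i(k) \geq \frac{h M}{Z} \cdot \frac{1}{Z}\sum_{i=1}^{Z}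 b_i(k)$, where $M = \#\{1 \leq n \leq Z : n \in Q\}$. -/
/-!
The number `b_i(k) = f_i (f_i - 1) ⋯ (f_i - k + 1)` is the number of injective `k`-tuples of
elements `a ∈ A` with `i + a` coprime to `Z`, so summing over `i` and swapping the order of
summation gives the identity. Coprimality to `Z` is `Z`-periodic, so every translate of `[1, Z]`
contains exactly `M` integers coprime to `Z`, whence `∑ f_i = hM`. As `b_i(k)` is increasing in
`f_i`, Chebyshev's sum inequality gives `(∑ f_i)(∑ b_i(k)) ≤ Z ∑ f_i b_i(k)`, and
`f_i b_i(k) = b_i(k + 1) + k b_i(k)`.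
-/

open Finset Function

theorem Nat.self_mul_descFactorial (n k : ℕ) :
    n * n.descFactorial k = n.descFactorial (k + 1) + k * n.descFactorial k := by
  rcases le_or_gt k n with hkn | hnk
  · rw [Nat.descFactorial_succ, ← add_mul, Nat.sub_add_cancel hkn]
  · simp [Nat.descFactorial_eq_zero_iff_lt.mpr hnk]

theorem sum_mul_sum_descFactorial_le {ι : Type*} (s : Finset ι) (f : ι → ℕ) (k : ℕ) :
    (∑ i ∈ s, f i) * ∑ i ∈ s, (f i).descFactorial k
      ≤ #s * (∑ i ∈ s, (f i).descFactorial (k + 1)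
        + k * ∑ i ∈ s, (f i).descFactorial k) := by
  have hmono : Monovary (fun i => (f i).descFactorial k) f :=
    (monovary_self f).comp_monotone_left fun _ _ h => Nat.descFactorial_le k h
  calc (∑ i ∈ s, f i) * ∑ i ∈ s, (f i).descFactorial k
      = (∑ i ∈ s, (f i).descFactorial k) * ∑ i ∈ s, f i := mul_comm _ _
    _ ≤ #s * ∑ i ∈ s, (f i).descFactorial k * f i :=
      (hmono.monovaryOn _).sum_mul_sum_le_card_mul_sum
    _ = _ := by
      simp only [mul_comm _ (f _), Nat.self_mul_descFactorial, sum_add_distrib, mul_sum]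

theorem Finset.card_filter_injective_piFinset {ι α : Type*} [Fintype ι] [DecidableEq ι]
    [DecidableEq α] (s : Finset α) :
    #{t ∈ Fintype.piFinset fun _ : ι => s | Injective t}
      = (#s).descFactorial (Fintype.card ι) := by
  rw [← Fintype.card_coe s, ← Fintype.card_embedding_eq]
  refine card_eq_of_equiv_fintype
    { toFun := fun t => ⟨fun j => ⟨t.1 j, Fintype.mem_piFinset.mp (mem_filter.mp t.2).1 j⟩,
        fun _ _ hj => (mem_filter.mp t.2).2 (congrArg Subtype.val hj)⟩
      invFun := fun e => ⟨fun j => e j, mem_filter.mpr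
        ⟨Fintype.mem_piFinset.mpr fun j => (e j).2,
          fun _ _ hj => e.injective (Subtype.ext hj)⟩⟩
      left_inv := fun _ => rfl
      right_inv := fun _ => rfl }

theorem sum_descFactorial_card_filter {α β : Type*} [DecidableEq α] (k : ℕ) (I : Finset β)
    (s : Finset α) (r : β → α → Prop) [∀ i a, Decidable (r i a)] :
    ∑ i ∈ I, (#{a ∈ s | r i a}).descFactorial k
      = ∑ t ∈ {t ∈ Fintype.piFinset fun _ : Fin k => s | Injective t},
          #{i ∈ I | ∀ j, r i (t j)} := by
  have hpi (i : β) : {t ∈ Fintype.piFinset fun _ : Fin k => {a ∈ s | r i a} | Injective t}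
      = {t ∈ {t ∈ Fintype.piFinset fun _ : Fin k => s | Injective t} | ∀ j, r i (t j)} := by
    ext t
    simp only [mem_filter, Fintype.mem_piFinset]
    grind
  refine (sum_congr rfl fun i _ => ?_).trans
    (sum_card_bipartiteAbove_eq_sum_card_bipartiteBelow
      fun i (t : Fin k → α) => ∀ j, r i (t j))
  rw [bipartiteAbove, ← hpi, card_filter_injective_piFinset, Fintype.card_fin]

theorem Int.card_filter_Ico_eq_of_periodic {p : ℤ → Prop} [DecidablePred p] {n : ℤ}
    (hp : Periodic p n) (c d : ℤ) :
    #{i ∈ Ico c (c + n) | p i} = #{i ∈ Ico d (d + n) | p i} := by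
  rcases le_or_gt n 0 with hn | hn
  · simp [Ico_eq_empty_of_le (by omega : c + n ≤ c), Ico_eq_empty_of_le (by omega : d + n ≤ d)]
  have hmod (a b : ℤ) : p (toIcoMod hn a b) ↔ p b := by
    simp only [toIcoMod, hp.sub_zsmul_eq]
  have hmem (a b i : ℤ) (hi : i ∈ {i ∈ Ico a (a + n) | p i}) :
      toIcoMod hn b i ∈ {i ∈ Ico b (b + n) | p i} := by
    rw [mem_filter, mem_Ico] at hi ⊢
    exact ⟨toIcoMod_mem_Ico hn b i, (hmod b i).mpr hi.2⟩
  have hinv (a b i : ℤ) (hi : i ∈ {i ∈ Ico a (a + n) | p i}) :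
      toIcoMod hn a (toIcoMod hn b i) = i := by
    rw [toIcoMod_toIcoMod, toIcoMod_eq_self, ← coe_Ico]
    exact (mem_filter.mp hi).1
  exact card_bij' (fun i _ => toIcoMod hn d i) (fun i _ => toIcoMod hn c i)
    (hmem c d) (hmem d c) (hinv c d) (hinv d c)

theorem Int.card_filter_Icc_gcd_add_eq_one (n : ℕ) (a : ℤ) :
    #{i ∈ Icc 1 (n : ℤ) | Int.gcd (i + a) n = 1}
      = #{i ∈ Icc 1 (n : ℤ) | Int.gcd i n = 1} := by
  have hp : Periodic (fun i : ℤ => Int.gcd i n = 1) n := fun i => by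
    simp only [Int.gcd_add_self_left]
  rw [← Ico_add_one_right_eq_Icc, add_comm (n : ℤ) 1,
    ← Int.card_filter_Ico_eq_of_periodic hp (1 + a) 1]
  refine card_nbij' (· + a) (· - a) ?_ ?_ ?_ ?_ <;> intro i hi <;> simp_all <;> omega

theorem Int.sum_card_filter_gcd_add_eq_one (A : Finset ℤ) (n : ℕ) :
    ∑ i ∈ Icc 1 (n : ℤ), #{a ∈ A | Int.gcd (i + a) n = 1}
      = #A * #{i ∈ Icc 1 (n : ℤ) | Int.gcd i n = 1} := by
  refine (sum_card_bipartiteAbove_eq_sum_card_bipartiteBelow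
    (fun i a => Int.gcd (i + a) n = 1) (s := Icc 1 (n : ℤ)) (t := A)).trans ?_
  rw [← smul_eq_mul, ← sum_const]
  exact sum_congr rfl fun a _ => Int.card_filter_Icc_gcd_add_eq_one n a

theorem stmt12_general (h k : ℕ) (A : Finset ℤ) (hA : A.card = h)
    (Z : ℕ)
    (f : ℤ → ℕ)
    (hf : ∀ i, f i = (A.filter fun a => Int.gcd (i + a) (Z : ℤ) = 1).card)
    (b : ℤ → ℕ → ℤ)
    (hb : ∀ i k', b i k' = ∏ j ∈ Finset.range k', ((f i : ℤ) - j))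
    (M : ℕ)
    (hM : M = ((Finset.Icc 1 (Z : ℤ)).filter fun n => Int.gcd n (Z : ℤ) = 1).card) :
    (∑ i ∈ Finset.Icc 1 (Z : ℤ), b i k
      = ∑ t ∈ (Fintype.piFinset fun _ : Fin k => A).filter Function.Injective,
          (((Finset.Icc 1 (Z : ℤ)).filter
            (fun i => ∀ j, Int.gcd (i + t j) (Z : ℤ) = 1)).card : ℤ)) ∧
    ((h : ℝ) * M / Z) * ((1 : ℝ) / Z * ∑ i ∈ Finset.Icc 1 (Z : ℤ), (b i k : ℝ))
      ≤ (1 : ℝ) / Z * ∑ i ∈ Finset.Icc 1 (Z : ℤ), (b i (k + 1) : ℝ)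
        + k * ((1 : ℝ) / Z * ∑ i ∈ Finset.Icc 1 (Z : ℤ), (b i k : ℝ)) := by
  have hb_desc (i : ℤ) (k' : ℕ) : b i k' = (f i).descFactorial k' := by
    rw [hb, ← descPochhammer_eval_eq_prod_range, descPochhammer_eval_eq_descFactorial]
  have hcount := sum_descFactorial_card_filter k (Icc 1 (Z : ℤ)) A
    fun i a => Int.gcd (i + a) Z = 1
  have hsum : ∑ i ∈ Icc 1 (Z : ℤ), f i = h * M := by
    simp only [hf]
    rw [Int.sum_card_filter_gcd_add_eq_one, hA, hM]
  have hcheb := sum_mul_sum_descFactorial_le (Icc 1 (Z : ℤ)) f k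
  rw [hsum, Int.card_Icc, add_sub_cancel_right, Int.toNat_natCast] at hcheb
  simp only [hb_desc, ← hf] at hcount ⊢
  refine ⟨mod_cast hcount, ?_⟩
  set S := ∑ i ∈ Icc 1 (Z : ℤ), ((f i).descFactorial k : ℝ)
  set S' := ∑ i ∈ Icc 1 (Z : ℤ), ((f i).descFactorial (k + 1) : ℝ)
  have hchebR : (h * M * S : ℝ) ≤ Z * (S' + k * S) := by
    have := (Nat.cast_le (α := ℝ)).mpr hcheb
    push_cast at this
    exact this
  rcases eq_or_ne (Z : ℝ) 0 with hZ | hZ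
  · simp [hZ]
  calc (h * M / Z) * (1 / Z * S : ℝ) = h * M * S / (Z * Z) := by ring
    _ ≤ Z * (S' + k * S) / (Z * Z) := by gcongr
    _ = 1 / Z * S' + k * (1 / Z * S) := by field_simp

/-- Section 14 of the paper: with `f_i = #{a ∈ A : (i+a, Z) = 1}` and
`b_i(k) = f_i(f_i-1)⋯(f_i-k+1)`, the sum `∑_{i=1}^Z b_i(k)` counts pairs of
`i` and ordered `k`-tuples of distinct elements of `A` all coprime-shifted,
and Chebyshev's inequality yields
`(1/Z)∑ b_i(k+1) + k(1/Z)∑ b_i(k) ≥ (hM/Z)(1/Z)∑ b_i(k)`. -/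
theorem stmt12 (h k : ℕ) (hk : 1 ≤ k) (A : Finset ℤ) (hA : A.card = h)
    (z : ℕ) (hz : 2 ≤ z)
    (Z : ℕ) (hZ : Z = ∏ p ∈ (Finset.range (z + 1)).filter Nat.Prime, p)
    (f : ℤ → ℕ)
    (hf : ∀ i, f i = (A.filter fun a => Int.gcd (i + a) (Z : ℤ) = 1).card)
    (b : ℤ → ℕ → ℤ)
    (hb : ∀ i k', b i k' = ∏ j ∈ Finset.range k', ((f i : ℤ) - j))
    (M : ℕ)
    (hM : M = ((Finset.Icc 1 (Z : ℤ)).filter fun n => Int.gcd n (Z : ℤ) = 1).card) :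
    (∑ i ∈ Finset.Icc 1 (Z : ℤ), b i k
      = ∑ t ∈ (Fintype.piFinset fun _ : Fin k => A).filter Function.Injective,
          (((Finset.Icc 1 (Z : ℤ)).filter
            (fun i => ∀ j, Int.gcd (i + t j) (Z : ℤ) = 1)).card : ℤ)) ∧
    ((h : ℝ) * M / Z) * ((1 : ℝ) / Z * ∑ i ∈ Finset.Icc 1 (Z : ℤ), (b i k : ℝ))
      ≤ (1 : ℝ) / Z * ∑ i ∈ Finset.Icc 1 (Z : ℤ), (b i (k + 1) : ℝ)
        + k * ((1 : ℝ) / Z * ∑ i ∈ Finset.Icc 1 (Z : ℤ), (b i k : ℝ)) :=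
  stmt12_general h k A hA Z f hf b hb M hM
end
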